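/- Let E be a symmetric 3×3 real matrix and ê ∈ ℝ³ a unit vector; set Q = −I + 2 ê⊗ê and Ê = Q E Q, and assume Ê ≠ E. Define a = 4 ((ê · E ê) ê − E ê) and n = ê. Then the following are equivalent: (i) for every f ∈ [0,1] there exist vectors b, m ∈ ℝ³ with f Ê + (1−f) E = (1/2)(b ⊗ m + m ⊗ b); (ii) all three of the following hold: (CCL1) the middle eigenvalue of E (eigenvalues ordered increasingly) is 0 and E has rank 2; (CCL2) (a · v₂)(n · v₂) = 0, where v₂ is a unit vector with E v₂ = 0; (CCL3) (tr(E + Ê))² − tr((E + Ê)²) ≤ 0. -/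

import Mathlib

/-!
Write `Ê = E + A`; expanding `Q E Q` gives `A = ½ (a ⊗ n + n ⊗ a)`, so the segment is the pencil
`E + f A`, `0 ≤ f ≤ 1`. A symmetric 3×3 matrix has the form `½ (b ⊗ m + m ⊗ b)` iff its
eigenvalues are `λ ≤ 0 ≤ λ'` and `0`, i.e. iff its determinant vanishes and its second invariant
`σ₂` (the sum of its principal 2×2 minors) is `≤ 0`. Since `det A = 0`, `det (E + f A)` is a
polynomial of degree ≤ 2 in `f` with linear coefficient `tr (adj E · A)`; since `Ê` is conjugate
to `E`, `σ₂ (E + f A)` is a concave quadratic symmetric about `f = ½`. Hence the segment condition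
amounts to `det E = 0`, `tr (adj E · A) = 0` and `σ₂ (E + A/2) ≤ 0`. The last is (CCL3) and forces
`σ₂ E < 0`, which with `det E = 0` is (CCL1); then `adj E = σ₂ E · v₂ ⊗ v₂`, which turns
`tr (adj E · A) = 0` into (CCL2).
-/

open Matrix Polynomial

/-- `μ` is the middle eigenvalue of the symmetric matrix `E`: its eigenvalues,
with multiplicity, are `l1 ≤ μ ≤ l3`. -/
def IsMiddleEigenvalue (E : Matrix (Fin 3) (Fin 3) ℝ) (μ : ℝ) : Prop :=
  ∃ l1 l3 : ℝ, l1 ≤ μ ∧ μ ≤ l3 ∧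
    E.charpoly = (X - C l1) * (X - C μ) * (X - C l3)

noncomputable def secondInvariant {n : Type*} [Fintype n] (M : Matrix n n ℝ) : ℝ :=
  (M.trace ^ 2 - (M * M).trace) / 2

noncomputable def symTensor {n : Type*} (b m : n → ℝ) : Matrix n n ℝ :=
  (1 / 2 : ℝ) • (vecMulVec b m + vecMulVec m b)

lemma symTensor_isSymm {n : Type*} (b m : n → ℝ) : (symTensor b m).IsSymm := by
  simp only [IsSymm, symTensor, transpose_smul, transpose_add, transpose_vecMulVec, add_comm]

section
variable {n : Type*} [Fintype n]

lemma dotProduct_mulVec_symTensor (a b v : n → ℝ) :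
    v ⬝ᵥ (symTensor a b *ᵥ v) = (a ⬝ᵥ v) * (b ⬝ᵥ v) := by
  rw [dotProduct_mulVec]
  simp only [symTensor, vecMul_smul, vecMul_add, vecMul_vecMulVec, smul_dotProduct,
    add_dotProduct, smul_eq_mul, dotProduct_comm v a, dotProduct_comm v b]
  ring

lemma secondInvariant_symTensor (b m : n → ℝ) :
    secondInvariant (symTensor b m) = ((b ⬝ᵥ m) ^ 2 - (b ⬝ᵥ b) * (m ⬝ᵥ m)) / 4 := by
  simp only [secondInvariant, symTensor, Matrix.smul_mul, Matrix.mul_smul, add_mul, mul_add,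
    vecMulVec_mul_vecMulVec, vecMulVec_smul, trace_smul, trace_add, trace_vecMulVec,
    smul_eq_mul, dotProduct_comm m b]
  ring

lemma secondInvariant_symTensor_nonpos (b m : n → ℝ) :
    secondInvariant (symTensor b m) ≤ 0 := by
  have := Finset.sum_mul_sq_le_sq_mul_sq Finset.univ b m
  rw [secondInvariant_symTensor]
  simp only [dotProduct, ← sq] at this ⊢
  linarith

lemma dotProduct_self_pos {v : n → ℝ} (hv : v ≠ 0) : 0 < v ⬝ᵥ v :=
  lt_of_le_of_ne (by simpa using dotProduct_self_star_nonneg v)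
    (Ne.symm (dotProduct_self_eq_zero.not.mpr hv))

lemma secondInvariant_symTensor_neg {b m : n → ℝ} (hb : b ≠ 0)
    (hm : m ≠ 0) (hbm : b ⬝ᵥ m = 0) : secondInvariant (symTensor b m) < 0 := by
  rw [secondInvariant_symTensor, hbm]
  nlinarith [mul_pos (dotProduct_self_pos hb) (dotProduct_self_pos hm)]

lemma symTensor_conj (U : Matrix n n ℝ) (b m : n → ℝ) :
    U * symTensor b m * Uᵀ = symTensor (U *ᵥ b) (U *ᵥ m) := by
  simp only [symTensor, Matrix.mul_smul, Matrix.smul_mul, mul_add, add_mul, mul_vecMulVec,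
    vecMulVec_mul, vecMul_transpose]

lemma secondInvariant_smul (r : ℝ) (M : Matrix n n ℝ) :
    secondInvariant (r • M) = r ^ 2 * secondInvariant M := by
  simp only [secondInvariant, trace_smul, Matrix.smul_mul, Matrix.mul_smul, smul_smul,
    smul_eq_mul]
  ring

lemma secondInvariant_add_smul (E A : Matrix n n ℝ) (f : ℝ) :
    secondInvariant (E + f • A) = secondInvariant E
      + f * (E.trace * A.trace - (E * A).trace) + f ^ 2 * secondInvariant A := by
  simp only [secondInvariant, add_mul, mul_add, Matrix.smul_mul, Matrix.mul_smul, trace_add,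
    trace_smul, smul_eq_mul, trace_mul_comm A E]
  ring

lemma exists_eq_smul_of_mulVec_eq_zero {A : Matrix n n ℝ} (hrank : A.rank + 1 = Fintype.card n)
    {v : n → ℝ} (hv : v ≠ 0) (hAv : A *ᵥ v = 0) {x : n → ℝ} (hAx : A *ᵥ x = 0) :
    ∃ c : ℝ, x = c • v := by
  have hker : Module.finrank ℝ (LinearMap.ker A.mulVecLin) = 1 := by
    have := LinearMap.finrank_range_add_finrank_ker A.mulVecLin
    rw [← Matrix.rank, Module.finrank_fintype_fun_eq_card] at this
    omega
  obtain ⟨c, hc⟩ := (finrank_eq_one_iff_of_nonzero' (⟨v, hAv⟩ : LinearMap.ker A.mulVecLin)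
    fun h => hv (congrArg Subtype.val h)).mp hker ⟨x, hAx⟩
  exact ⟨c, by simpa using congrArg Subtype.val hc.symm⟩

variable [DecidableEq n]

lemma trace_conj {U : Matrix n n ℝ} (hU : Uᵀ * U = 1) (M : Matrix n n ℝ) :
    (U * M * Uᵀ).trace = M.trace := by
  rw [trace_mul_comm, ← mul_assoc, hU, one_mul]

lemma secondInvariant_conj {U : Matrix n n ℝ} (hU : Uᵀ * U = 1) (M : Matrix n n ℝ) :
    secondInvariant (U * M * Uᵀ) = secondInvariant M := by
  have hsq : U * M * Uᵀ * (U * M * Uᵀ) = U * (M * M) * Uᵀ := by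
    simp only [mul_assoc, ← mul_assoc Uᵀ, hU, one_mul]
  rw [secondInvariant, secondInvariant, hsq, trace_conj hU, trace_conj hU]

lemma det_conj_of_transpose_mul_self {U : Matrix n n ℝ} (hU : Uᵀ * U = 1) (M : Matrix n n ℝ) :
    (U * M * Uᵀ).det = M.det := by
  rw [det_mul_comm, ← mul_assoc, hU, one_mul]

lemma Matrix.IsSymm.eq_trace_smul_vecMulVec {M : Matrix n n ℝ} (hM : M.IsSymm) {v : n → ℝ}
    (hv : v ⬝ᵥ v = 1) (hcol : ∀ x, ∃ c : ℝ, M *ᵥ x = c • v) :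
    M = M.trace • vecMulVec v v := by
  choose c hc using fun j => hcol (Pi.single j 1)
  have hcols : M = vecMulVec v c := by
    ext i j
    simpa [mulVec_single, vecMulVec_apply, mul_comm] using congrFun (hc j) i
  -- `M = v ⊗ c` and `M = Mᵀ = c ⊗ v`, so `M` is fixed by right multiplication with `v ⊗ v`
  have hproj : M * vecMulVec v v = M := by
    conv_lhs => rw [← hM.eq, hcols, transpose_vecMulVec]
    rw [vecMulVec_mul_vecMulVec, hv, one_smul, ← transpose_vecMulVec, ← hcols, hM.eq]
  have htrace : M.trace = c ⬝ᵥ v := by rw [hcols, trace_vecMulVec, dotProduct_comm]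
  calc M = M * vecMulVec v v := hproj.symm
    _ = (c ⬝ᵥ v) • vecMulVec v v := by rw [hcols, vecMulVec_mul_vecMulVec, vecMulVec_smul]
    _ = M.trace • vecMulVec v v := by rw [htrace]

lemma reflection_transpose_mul_self {e : n → ℝ} (he : e ⬝ᵥ e = 1) :
    (-1 + (2 : ℝ) • vecMulVec e e)ᵀ * (-1 + (2 : ℝ) • vecMulVec e e) = 1 := by
  have hP : vecMulVec e e * vecMulVec e e = vecMulVec e e := by
    rw [vecMulVec_mul_vecMulVec, he, one_smul]
  simp only [transpose_add, transpose_neg, transpose_one, transpose_smul, transpose_vecMulVec,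
    add_mul, mul_add, neg_mul, mul_neg, one_mul, mul_one, Matrix.smul_mul, Matrix.mul_smul, hP,
    smul_smul]
  module

lemma reflection_conj_eq_add_symTensor {E : Matrix n n ℝ} (hE : E.IsSymm) (e : n → ℝ) :
    (-1 + (2 : ℝ) • vecMulVec e e) * E * (-1 + (2 : ℝ) • vecMulVec e e)
      = E + symTensor ((4 : ℝ) • ((e ⬝ᵥ E *ᵥ e) • e - E *ᵥ e)) e := by
  have hPE : vecMulVec e e * E = vecMulVec e (E *ᵥ e) := by
    rw [vecMulVec_mul, ← mulVec_transpose, hE.eq]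
  have hEP : E * vecMulVec e e = vecMulVec (E *ᵥ e) e := mul_vecMulVec E e e
  have hPEP : vecMulVec e (E *ᵥ e) * vecMulVec e e = (e ⬝ᵥ E *ᵥ e) • vecMulVec e e := by
    rw [vecMulVec_mul_vecMulVec, dotProduct_comm, vecMulVec_smul]
  simp only [symTensor, add_mul, mul_add, neg_mul, mul_neg, one_mul, mul_one, Matrix.smul_mul,
    Matrix.mul_smul, hPE, hEP, hPEP, smul_vecMulVec, vecMulVec_smul, sub_vecMulVec,
    vecMulVec_sub, smul_smul]
  module

end

lemma Matrix.IsSymm.exists_monotone_diagonalization {k : ℕ} {S : Matrix (Fin k) (Fin k) ℝ}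
    (hS : S.IsSymm) :
    ∃ (U : Matrix (Fin k) (Fin k) ℝ) (μ : Fin k → ℝ), Uᵀ * U = 1 ∧ Monotone μ ∧
      S = U * diagonal μ * Uᵀ ∧ S.rank = Fintype.card {i // μ i ≠ 0} := by
  have hH : S.IsHermitian := by
    rwa [IsHermitian, conjTranspose_eq_transpose_of_trivial]
  set U₀ : Matrix (Fin k) (Fin k) ℝ := (hH.eigenvectorUnitary : Matrix (Fin k) (Fin k) ℝ)
  set σ := Tuple.sort hH.eigenvalues
  have hU₀ : U₀ᵀ * U₀ = 1 := by
    simpa [U₀, Matrix.star_eq_conjTranspose] using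
      (Matrix.mem_unitaryGroup_iff').mp hH.eigenvectorUnitary.2
  have hS₀ : S = U₀ * diagonal hH.eigenvalues * U₀ᵀ := by
    simpa [Unitary.conjStarAlgAut_apply, Matrix.star_eq_conjTranspose, U₀] using
      hH.spectral_theorem
  refine ⟨U₀.submatrix id σ, hH.eigenvalues ∘ σ, ?_, Tuple.monotone_sort _, ?_, ?_⟩
  · rw [transpose_submatrix, ← submatrix_mul _ _ _ _ _ Function.bijective_id, hU₀,
      submatrix_one_equiv]
  · refine hS₀.trans ?_
    rw [transpose_submatrix, ← submatrix_diagonal_equiv, submatrix_mul_equiv,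
      submatrix_mul_equiv, submatrix_id_id]
  · rw [hH.rank_eq_card_non_zero_eigs]
    exact Fintype.card_congr (σ.subtypeEquiv fun _ => Iff.rfl).symm

section
variable (M : Matrix (Fin 3) (Fin 3) ℝ)

lemma secondInvariant_fin_three :
    secondInvariant M = M 0 0 * M 1 1 + M 0 0 * M 2 2 + M 1 1 * M 2 2
      - M 0 1 * M 1 0 - M 0 2 * M 2 0 - M 1 2 * M 2 1 := by
  simp only [secondInvariant, trace_fin_three, mul_apply, Fin.sum_univ_three]
  ring

lemma charpoly_fin_three :
    M.charpoly = X ^ 3 - C M.trace * X ^ 2 + C (secondInvariant M) * X - C M.det := by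
  simp [charpoly, charmatrix, det_fin_three, trace_fin_three, secondInvariant_fin_three]
  ring

lemma trace_adjugate_fin_three : (adjugate M).trace = secondInvariant M := by
  simp [adjugate_fin_three, trace_fin_three, secondInvariant_fin_three]
  ring

lemma isMiddleEigenvalue_zero_iff :
    IsMiddleEigenvalue M 0 ↔ M.det = 0 ∧ secondInvariant M ≤ 0 := by
  rw [IsMiddleEigenvalue, charpoly_fin_three]
  constructor
  · rintro ⟨l1, l3, h1, h3, hp⟩
    have e0 := congrArg (eval 0) hp
    have e1 := congrArg (eval 1) hp
    have e2 := congrArg (eval (-1)) hp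
    simp only [eval_sub, eval_add, eval_mul, eval_pow, eval_X, eval_C] at e0 e1 e2
    have hc2 : secondInvariant M = l1 * l3 := by linarith
    exact ⟨by linarith, hc2 ▸ mul_nonpos_of_nonpos_of_nonneg h1 h3⟩
  · rintro ⟨hdet, hc2⟩
    set τ := M.trace
    -- the other two eigenvalues are the roots `(τ ± s) / 2` of `X ^ 2 - τ X + secondInvariant M`
    set s := √(τ ^ 2 - 4 * secondInvariant M)
    have hs : s ^ 2 = τ ^ 2 - 4 * secondInvariant M := Real.sq_sqrt (by nlinarith)
    have hτs : |τ| ≤ s := Real.abs_le_sqrt (by linarith)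
    refine ⟨(τ - s) / 2, (τ + s) / 2, by linarith [le_abs_self τ], by linarith [neg_abs_le τ], ?_⟩
    simp only [hdet, map_zero, sub_zero]
    have hsum : C τ = C ((τ - s) / 2) + C ((τ + s) / 2) := by rw [← C_add]; ring_nf
    have hprod : C (secondInvariant M) = C ((τ - s) / 2) * C ((τ + s) / 2) := by
      rw [← C_mul]; congr 1; linear_combination hs / 4
    rw [hsum, hprod]
    ring

end

lemma det_add_smul_fin_three (E A : Matrix (Fin 3) (Fin 3) ℝ) (f : ℝ) :
    (E + f • A).det = E.det + f * (adjugate E * A).trace + f ^ 2 * (adjugate A * E).trace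
      + f ^ 3 * A.det := by
  simp only [det_fin_three, adjugate_fin_three, trace_fin_three, mul_apply, Fin.sum_univ_three]
  simp
  ring

lemma det_symTensor_fin_three (b m : Fin 3 → ℝ) : (symTensor b m).det = 0 := by
  simp [symTensor, det_fin_three, vecMulVec_apply]
  ring

lemma det_diagonal_fin_three (μ : Fin 3 → ℝ) : (diagonal μ).det = μ 0 * μ 1 * μ 2 := by
  rw [det_diagonal, Fin.prod_univ_three]

lemma secondInvariant_diagonal_fin_three (μ : Fin 3 → ℝ) :
    secondInvariant (diagonal μ) = μ 0 * μ 1 + μ 0 * μ 2 + μ 1 * μ 2 := by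
  simp [secondInvariant_fin_three]

lemma diagonal_eq_symTensor {μ : Fin 3 → ℝ} (h0 : μ 0 ≤ 0) (h1 : μ 1 = 0) (h2 : 0 ≤ μ 2) :
    diagonal μ = symTensor ![√(-μ 0), 0, √(μ 2)] ![-√(-μ 0), 0, √(μ 2)] := by
  have hs0 := Real.mul_self_sqrt (neg_nonneg.mpr h0)
  have hs2 := Real.mul_self_sqrt h2
  ext i j
  fin_cases i <;> fin_cases j <;> simp [symTensor, h1] <;> linarith

lemma middle_eq_zero_of_monotone {μ : Fin 3 → ℝ} (hμ : Monotone μ) (hdet : μ 0 * μ 1 * μ 2 = 0)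
    (hc2 : μ 0 * μ 1 + μ 0 * μ 2 + μ 1 * μ 2 ≤ 0) : μ 1 = 0 := by
  have h01 : μ 0 ≤ μ 1 := hμ (by decide)
  have h12 : μ 1 ≤ μ 2 := hμ (by decide)
  rcases mul_eq_zero.mp hdet with h | h
  · rcases mul_eq_zero.mp h with h | h
    · nlinarith [mul_nonneg (h ▸ h01 : (0:ℝ) ≤ μ 1) (h ▸ h01.trans h12 : (0:ℝ) ≤ μ 2)]
    · exact h
  · nlinarith [mul_nonneg (by linarith : (0:ℝ) ≤ -μ 0) (by linarith : (0:ℝ) ≤ -μ 1)]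

section
variable {S : Matrix (Fin 3) (Fin 3) ℝ}

lemma Matrix.IsSymm.exists_eq_symTensor_iff (hS : S.IsSymm) :
    (∃ b m, S = symTensor b m) ↔ S.det = 0 ∧ secondInvariant S ≤ 0 := by
  refine ⟨fun ⟨b, m, hbm⟩ => hbm ▸ ⟨det_symTensor_fin_three b m,
    secondInvariant_symTensor_nonpos b m⟩, fun ⟨hdet, hc2⟩ => ?_⟩
  obtain ⟨U, μ, hU, hμ, rfl, -⟩ := hS.exists_monotone_diagonalization
  rw [det_conj_of_transpose_mul_self hU, det_diagonal_fin_three] at hdet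
  rw [secondInvariant_conj hU, secondInvariant_diagonal_fin_three] at hc2
  have h1 := middle_eq_zero_of_monotone hμ hdet hc2
  rw [diagonal_eq_symTensor (h1 ▸ hμ (by decide)) h1 (h1 ▸ hμ (by decide)), symTensor_conj]
  exact ⟨_, _, rfl⟩

lemma Matrix.IsSymm.rank_eq_two_iff (hS : S.IsSymm) (hdet : S.det = 0)
    (hc2 : secondInvariant S ≤ 0) :
    S.rank = 2 ↔ secondInvariant S < 0 := by
  obtain ⟨U, μ, hU, hμ, rfl, hrank⟩ := hS.exists_monotone_diagonalization
  rw [det_conj_of_transpose_mul_self hU, det_diagonal_fin_three] at hdet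
  rw [secondInvariant_conj hU, secondInvariant_diagonal_fin_three] at hc2 ⊢
  have h1 := middle_eq_zero_of_monotone hμ hdet hc2
  have h0 : μ 0 ≤ 0 := h1 ▸ hμ (by decide)
  have h2 : 0 ≤ μ 2 := h1 ▸ hμ (by decide)
  have hneg : μ 0 * μ 2 < 0 ↔ μ 0 ≠ 0 ∧ μ 2 ≠ 0 := by
    refine ⟨fun h => ⟨fun h' => by simp [h'] at h, fun h' => by simp [h'] at h⟩,
      fun ⟨h0', h2'⟩ => mul_neg_of_neg_of_pos (h0.lt_of_ne h0') (h2.lt_of_ne' h2')⟩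
  rw [hrank, Fintype.card_subtype, Finset.card_filter, Fin.sum_univ_three, h1]
  simp only [mul_zero, zero_mul, add_zero, zero_add, hneg]
  by_cases h0' : μ 0 = 0 <;> by_cases h2' : μ 2 = 0 <;> simp [h0', h2']

lemma Matrix.IsSymm.isMiddleEigenvalue_zero_and_rank_eq_two_iff (hS : S.IsSymm) :
    IsMiddleEigenvalue S 0 ∧ S.rank = 2 ↔ S.det = 0 ∧ secondInvariant S < 0 := by
  rw [isMiddleEigenvalue_zero_iff]
  constructor
  · rintro ⟨⟨hdet, hc2⟩, hrank⟩
    exact ⟨hdet, (hS.rank_eq_two_iff hdet hc2).mp hrank⟩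
  · rintro ⟨hdet, hc2⟩
    exact ⟨⟨hdet, hc2.le⟩, (hS.rank_eq_two_iff hdet hc2.le).mpr hc2⟩

lemma Matrix.IsSymm.adjugate_eq_of_rank_eq_two (hS : S.IsSymm) (hrank : S.rank = 2) {v : Fin 3 → ℝ}
    (hv : v ⬝ᵥ v = 1) (hSv : S *ᵥ v = 0) :
    S.adjugate = secondInvariant S • vecMulVec v v := by
  have hv0 : v ≠ 0 := by rintro rfl; simp at hv
  have hdet : S.det = 0 := exists_mulVec_eq_zero_iff.mp ⟨v, hv0, hSv⟩
  have hadj : S.adjugate.IsSymm := by rw [IsSymm, adjugate_transpose, hS.eq]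
  rw [← trace_adjugate_fin_three]
  -- the columns of `S.adjugate` lie in `ker S`, which is the line through `v`
  refine hadj.eq_trace_smul_vecMulVec hv fun x => ?_
  refine exists_eq_smul_of_mulVec_eq_zero (by simp [hrank]) hv0 hSv ?_
  rw [mulVec_mulVec, mul_adjugate, hdet, zero_smul, zero_mulVec]

lemma Matrix.IsSymm.trace_adjugate_mul_eq_zero_iff (hS : S.IsSymm) (hdet : S.det = 0)
    (hc2 : secondInvariant S < 0) (A : Matrix (Fin 3) (Fin 3) ℝ) :
    (S.adjugate * A).trace = 0 ↔ ∀ v, v ⬝ᵥ v = 1 → S *ᵥ v = 0 → v ⬝ᵥ (A *ᵥ v) = 0 := by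
  have hrank : S.rank = 2 := (hS.rank_eq_two_iff hdet hc2.le).mpr hc2
  have htrace : ∀ v, v ⬝ᵥ v = 1 → S *ᵥ v = 0 →
      (S.adjugate * A).trace = secondInvariant S * (v ⬝ᵥ (A *ᵥ v)) := fun v hv hSv => by
    rw [hS.adjugate_eq_of_rank_eq_two hrank hv hSv, Matrix.smul_mul, trace_smul, trace_mul_comm,
      mul_vecMulVec, trace_vecMulVec, dotProduct_comm, smul_eq_mul]
  obtain ⟨w, hw, hSw⟩ := exists_mulVec_eq_zero_iff.mpr hdet
  have hww : 0 < w ⬝ᵥ w := dotProduct_self_pos hw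
  set v := (√(w ⬝ᵥ w))⁻¹ • w
  have hv : v ⬝ᵥ v = 1 := by
    simp only [v, smul_dotProduct, dotProduct_smul, smul_eq_mul, ← mul_assoc, ← mul_inv,
      Real.mul_self_sqrt hww.le, inv_mul_cancel₀ hww.ne']
  have hSv : S *ᵥ v = 0 := by rw [mulVec_smul, hSw, smul_zero]
  constructor
  · intro h u hu hSu
    have := htrace u hu hSu
    rw [h] at this
    exact (mul_eq_zero.mp this.symm).resolve_left hc2.ne
  · intro h
    rw [htrace v hv hSv, h v hv hSv, mul_zero]

end

lemma forall_det_eq_zero_and_secondInvariant_nonpos_iff {E A : Matrix (Fin 3) (Fin 3) ℝ}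
    (hA_det : A.det = 0) (hA : secondInvariant A < 0) (hdet : (E + A).det = E.det)
    (hc2 : secondInvariant (E + A) = secondInvariant E) :
    (∀ f ∈ Set.Icc (0 : ℝ) 1, (E + f • A).det = 0 ∧ secondInvariant (E + f • A) ≤ 0) ↔
      (E.det = 0 ∧ secondInvariant E < 0) ∧ (E.adjugate * A).trace = 0 ∧
        secondInvariant (E + (1 / 2 : ℝ) • A) ≤ 0 := by
  have hdet_f : ∀ f : ℝ, (E + f • A).det
      = E.det + f * (E.adjugate * A).trace + f ^ 2 * (A.adjugate * E).trace := fun f => by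
    rw [det_add_smul_fin_three, hA_det]; ring
  have hdet_one := hdet_f 1
  rw [one_smul, hdet] at hdet_one
  -- `secondInvariant (E + f • A)` takes the same value at `f = 0` and `f = 1`
  have hc2_f : ∀ f : ℝ, secondInvariant (E + f • A)
      = secondInvariant (E + (1 / 2 : ℝ) • A) + secondInvariant A * (f - 1 / 2) ^ 2 := by
    have h := secondInvariant_add_smul E A 1
    rw [one_smul, hc2] at h
    intro f
    rw [secondInvariant_add_smul, secondInvariant_add_smul]
    linear_combination (1 / 2 - f) * h
  have hc2_zero := hc2_f 0
  rw [zero_smul, add_zero] at hc2_zero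
  constructor
  · intro h
    obtain ⟨h0, -⟩ := h 0 ⟨le_rfl, zero_le_one⟩
    obtain ⟨hhalf, hc2_half⟩ := h (1 / 2) ⟨by norm_num, by norm_num⟩
    rw [zero_smul, add_zero] at h0
    rw [hdet_f, h0] at hhalf
    exact ⟨⟨h0, by nlinarith⟩, by linarith, hc2_half⟩
  · rintro ⟨⟨h0, -⟩, h1, hc2_half⟩ f -
    have h3 : (A.adjugate * E).trace = 0 := by linarith
    refine ⟨by rw [hdet_f, h0, h1, h3]; ring, ?_⟩
    rw [hc2_f]
    nlinarith [sq_nonneg (f - 1 / 2)]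

lemma Matrix.IsSymm.forall_exists_symTensor_iff {E A : Matrix (Fin 3) (Fin 3) ℝ} (hE : E.IsSymm)
    (hA_symm : A.IsSymm) (hA_det : A.det = 0) (hA : secondInvariant A < 0)
    (hdet : (E + A).det = E.det) (hc2 : secondInvariant (E + A) = secondInvariant E) :
    (∀ f ∈ Set.Icc (0 : ℝ) 1, ∃ b m, E + f • A = symTensor b m) ↔
      (IsMiddleEigenvalue E 0 ∧ E.rank = 2) ∧
        (∀ v, v ⬝ᵥ v = 1 → E *ᵥ v = 0 → v ⬝ᵥ (A *ᵥ v) = 0) ∧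
        secondInvariant (E + (1 / 2 : ℝ) • A) ≤ 0 := by
  simp only [fun f : ℝ => (hE.add (hA_symm.smul f)).exists_eq_symTensor_iff]
  rw [forall_det_eq_zero_and_secondInvariant_nonpos_iff hA_det hA hdet hc2,
    hE.isMiddleEigenvalue_zero_and_rank_eq_two_iff]
  exact and_congr_right fun ⟨hdetE, hc2E⟩ =>
    and_congr_left' (hE.trace_adjugate_mul_eq_zero_iff hdetE hc2E A)

theorem stmt_13 (E : Matrix (Fin 3) (Fin 3) ℝ) (hE : E.IsSymm)
    (ehat : Fin 3 → ℝ) (he : ehat ⬝ᵥ ehat = 1)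
    (Q Ehat : Matrix (Fin 3) (Fin 3) ℝ)
    (hQ : Q = -1 + (2 : ℝ) • Matrix.vecMulVec ehat ehat)
    (hEhat : Ehat = Q * E * Q) (hneq : Ehat ≠ E)
    (a n : Fin 3 → ℝ)
    (ha : a = (4 : ℝ) • ((ehat ⬝ᵥ E.mulVec ehat) • ehat - E.mulVec ehat))
    (hn : n = ehat) :
    (∀ f ∈ Set.Icc (0 : ℝ) 1, ∃ b m : Fin 3 → ℝ,
        f • Ehat + (1 - f) • E
          = (1/2 : ℝ) • (Matrix.vecMulVec b m + Matrix.vecMulVec m b))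
    ↔ ((IsMiddleEigenvalue E 0 ∧ E.rank = 2) ∧
       (∀ v2 : Fin 3 → ℝ, v2 ⬝ᵥ v2 = 1 → E.mulVec v2 = 0 →
          (a ⬝ᵥ v2) * (n ⬝ᵥ v2) = 0) ∧
       ((E + Ehat).trace) ^ 2 - ((E + Ehat) * (E + Ehat)).trace ≤ 0) := by
  have hQ_orth : Qᵀ * Q = 1 := hQ ▸ reflection_transpose_mul_self he
  have hEhat_conj : Ehat = Q * E * Qᵀ := by
    rw [hEhat, hQ]
    simp [transpose_vecMulVec]
  have hEhat_eq : Ehat = E + symTensor a n := by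
    rw [hEhat, hQ, reflection_conj_eq_add_symTensor hE, ← ha, ← hn]
  have hA : secondInvariant (symTensor a n) < 0 := by
    have ha0 : a ≠ 0 := by
      rintro rfl
      exact hneq (by simp [hEhat_eq, symTensor])
    have hn0 : n ≠ 0 := by rintro rfl; simp [← hn] at he
    exact secondInvariant_symTensor_neg ha0 hn0 (by rw [ha, hn]; simp [he, dotProduct_comm])
  have key := hE.forall_exists_symTensor_iff (symTensor_isSymm a n) (det_symTensor_fin_three a n)
    hA (by rw [← hEhat_eq, hEhat_conj, det_conj_of_transpose_mul_self hQ_orth])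
    (by rw [← hEhat_eq, hEhat_conj, secondInvariant_conj hQ_orth])
  have hsegment : ∀ f : ℝ, f • Ehat + (1 - f) • E = E + f • symTensor a n := fun f => by
    rw [hEhat_eq]; module
  have hCCL3 : (E + Ehat).trace ^ 2 - ((E + Ehat) * (E + Ehat)).trace ≤ 0 ↔
      secondInvariant (E + (1 / 2 : ℝ) • symTensor a n) ≤ 0 := by
    have h := secondInvariant_smul 2 (E + (1 / 2 : ℝ) • symTensor a n)
    rw [show (2 : ℝ) • (E + (1 / 2 : ℝ) • symTensor a n) = E + Ehat by rw [hEhat_eq]; module,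
      secondInvariant] at h
    constructor <;> intro <;> linarith
  simp only [dotProduct_mulVec_symTensor] at key
  simp only [hsegment, hCCL3]
  exact key
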